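/- Let M = [[-1, -1], [1, -1]], C = ℝ²₊, and S(q) = {x : x ≥ 0, Mx + q ≥ 0, ⟨x, Mx+q⟩ = 0}. Then S fails the Lipschitz-like property relative to dom S = {q : q₁ ≥ 0, q₂ ≥ −q₁} at q̄ = (0,0) for x̄ = (0,0): for every κ ≥ 0 and every pair of neighborhoods V of q̄ and W of x̄, there exist q, q' ∈ dom S ∩ V with S(q) ∩ W ⊄ S(q') + κ‖q − q'‖𝔹. -/
import Mathlib


open Topology

noncomputable section

def vec2 (a b : ℝ) : EuclideanSpace ℝ (Fin 2) := (WithLp.equiv 2 (Fin 2 → ℝ)).symm ![a, b]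

@[simp] lemma vec2_apply0 (a b : ℝ) : vec2 a b 0 = a := rfl
@[simp] lemma vec2_apply1 (a b : ℝ) : vec2 a b 1 = b := rfl

lemma norm2_eq (y : EuclideanSpace ℝ (Fin 2)) : ‖y‖ = Real.sqrt ((y 0)^2 + (y 1)^2) := by
  rw [EuclideanSpace.norm_eq]
  simp [Fin.sum_univ_two, sq_abs]


lemma norm2_le (a b : ℝ) : ‖vec2 a b‖ ≤ |a| + |b| := by
  rw [norm2_eq]
  have h : (vec2 a b 0)^2 + (vec2 a b 1)^2 ≤ (|a| + |b|)^2 := by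
    simp only [vec2_apply0, vec2_apply1]
    nlinarith [abs_nonneg a, abs_nonneg b, sq_abs a, sq_abs b, mul_nonneg (abs_nonneg a) (abs_nonneg b)]
  calc Real.sqrt ((vec2 a b 0)^2 + (vec2 a b 1)^2) ≤ Real.sqrt ((|a|+|b|)^2) := Real.sqrt_le_sqrt h
    _ = |a| + |b| := Real.sqrt_sq (by positivity)

lemma norm2_ge (y : EuclideanSpace ℝ (Fin 2)) : |y 1| ≤ ‖y‖ := by
  rw [norm2_eq]
  calc |y 1| = Real.sqrt ((y 1)^2) := (Real.sqrt_sq_eq_abs _).symm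
    _ ≤ Real.sqrt ((y 0)^2 + (y 1)^2) := Real.sqrt_le_sqrt (by nlinarith [sq_nonneg (y 0)])

lemma vec2_sub (a b c d : ℝ) : vec2 a b - vec2 c d = vec2 (a - c) (b - d) := by
  ext i
  fin_cases i <;> simp [vec2]

/-- LCP solution mapping for `M = [[-1,-1],[1,-1]]`:
`S(q) = {x : x ≥ 0, Mx + q ≥ 0, ⟨x, Mx + q⟩ = 0}`. -/
def Slcp (q : EuclideanSpace ℝ (Fin 2)) : Set (EuclideanSpace ℝ (Fin 2)) :=
  {x | 0 ≤ x 0 ∧ 0 ≤ x 1 ∧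
    0 ≤ -(x 0) - x 1 + q 0 ∧ 0 ≤ x 0 - x 1 + q 1 ∧
    x 0 * (-(x 0) - x 1 + q 0) + x 1 * (x 0 - x 1 + q 1) = 0}

/-- `dom S = {q : q₁ ≥ 0, q₂ ≥ −q₁}`. -/
def domS : Set (EuclideanSpace ℝ (Fin 2)) := {q | 0 ≤ q 0 ∧ -(q 0) ≤ q 1}

/-- `S` fails the Lipschitz-like property relative to `dom S` at
`q̄ = 0` for `x̄ = 0`. -/
theorem stmt14 :
    ∀ κ : ℝ, 0 ≤ κ →
    ∀ V ∈ 𝓝 (0 : EuclideanSpace ℝ (Fin 2)), ∀ W ∈ 𝓝 (0 : EuclideanSpace ℝ (Fin 2)),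
      ∃ q ∈ domS ∩ V, ∃ q' ∈ domS ∩ V,
        ¬ (Slcp q ∩ W ⊆ {z | ∃ s ∈ Slcp q', ‖z - s‖ ≤ κ * ‖q - q'‖}) := by
  simp only [Slcp, domS]
  intro κ hκ V hV W hW
  obtain ⟨δ, hδ, hVb⟩ := Metric.mem_nhds_iff.mp hV
  obtain ⟨δ', hδ', hWb⟩ := Metric.mem_nhds_iff.mp hW
  set ε : ℝ := min δ δ' / 10 with hεdef
  have hε0 : 0 < ε := by
    have := lt_min hδ hδ'
    positivity
  set ε' : ℝ := ε / (2 * (κ + 1)) with hε'def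
  have hε'0 : 0 < ε' := by positivity
  have hε'le : ε' ≤ ε := by
    rw [hε'def]
    rw [div_le_iff₀ (by positivity)]
    nlinarith
  have hεδ : 3 * ε < δ := by
    have h1 : min δ δ' ≤ δ := min_le_left _ _
    nlinarith [lt_min hδ hδ']
  have hεδ' : 3 * ε < δ' := by
    have h1 : min δ δ' ≤ δ' := min_le_right _ _
    nlinarith [lt_min hδ hδ']
  refine ⟨vec2 ε ε, ⟨⟨by simp [hε0.le], by simp; linarith⟩, hVb ?_⟩,
          vec2 ε (ε + ε'), ⟨⟨by simp [hε0.le], by simp; linarith⟩, hVb ?_⟩, ?_⟩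
  · -- vec2 ε ε ∈ ball 0 δ
    rw [Metric.mem_ball, dist_zero_right]
    calc ‖vec2 ε ε‖ ≤ |ε| + |ε| := norm2_le _ _
      _ = 2 * ε := by rw [abs_of_pos hε0]; ring
      _ < δ := by linarith
  · rw [Metric.mem_ball, dist_zero_right]
    calc ‖vec2 ε (ε + ε')‖ ≤ |ε| + |ε + ε'| := norm2_le _ _
      _ = ε + (ε + ε') := by rw [abs_of_pos hε0, abs_of_pos (by linarith)]
      _ < δ := by linarith
  · intro hsub
    have hx : vec2 0 ε ∈ ({x : EuclideanSpace ℝ (Fin 2) | 0 ≤ x 0 ∧ 0 ≤ x 1 ∧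
        0 ≤ -(x 0) - x 1 + (vec2 ε ε) 0 ∧ 0 ≤ x 0 - x 1 + (vec2 ε ε) 1 ∧
        x 0 * (-(x 0) - x 1 + (vec2 ε ε) 0) + x 1 * (x 0 - x 1 + (vec2 ε ε) 1) = 0} ∩ W) := by
      constructor
      · refine ⟨le_refl 0, hε0.le, ?_, ?_, ?_⟩ <;> simp <;> ring_nf
      · apply hWb
        rw [Metric.mem_ball, dist_zero_right]
        calc ‖vec2 0 ε‖ ≤ |0| + |ε| := norm2_le _ _
          _ = ε := by rw [abs_of_pos hε0]; simp
          _ < δ' := by linarith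
    obtain ⟨s, ⟨hs1, hs2, hs3, hs4, hs5⟩, hsnorm⟩ := hsub hx
    simp only [vec2_apply0, vec2_apply1] at hs3 hs4 hs5
    -- show s 1 = 0
    have hs1z : s 1 = 0 := by
      have h1 : 0 ≤ s 0 * (-(s 0) - s 1 + ε) := mul_nonneg hs1 hs3
      nlinarith [mul_nonneg hs2 hs3, mul_nonneg hs2 hs1, mul_nonneg hs2 hε'0.le]
    -- norm bound
    have hdiff : vec2 ε ε - vec2 ε (ε + ε') = vec2 0 (-ε') := by
      rw [vec2_sub]; norm_num
    have hqq : ‖vec2 ε ε - vec2 ε (ε + ε')‖ ≤ ε' := by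
      rw [hdiff]
      calc ‖vec2 0 (-ε')‖ ≤ |0| + |-ε'| := norm2_le _ _
        _ = ε' := by rw [abs_neg, abs_of_pos hε'0]; simp
    have hlow : ε ≤ ‖vec2 0 ε - s‖ := by
      have := norm2_ge (vec2 0 ε - s)
      have happ : (vec2 0 ε - s) 1 = ε - s 1 := by
        simp only [PiLp.sub_apply, vec2_apply1]
      rw [happ, hs1z, sub_zero, abs_of_pos hε0] at this
      exact this
    have hkε : κ * ε' < ε := by
      have hx2 : ε' * (2 * (κ + 1)) = ε := by rw [hε'def]; field_simp
      nlinarith [mul_nonneg hκ hε'0.le]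
    have : κ * ‖vec2 ε ε - vec2 ε (ε + ε')‖ ≤ κ * ε' := mul_le_mul_of_nonneg_left hqq hκ
    linarith
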